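/- Let (W,S) be a Coxeter system, L a non-negative weight function, S° = {s : L(s)=0}, S⁺ = {s : L(s)>0}, W° = ⟨S°⟩, and S̃ = { w s w⁻¹ : w ∈ W°, s ∈ S⁺ }, W̃ = ⟨S̃⟩. Then W is the semidirect product W° ⋉ W̃ (W̃ is normal in W, W° ∩ W̃ = 1, and W = W° W̃), and (W̃, S̃) is a Coxeter system. -/

import Mathlib

/-!
Let `N` be the Coxeter group on `S̃` whose Coxeter matrix records the orders of the products
`t t'` in `W`. Conjugation by `W°` permutes `S̃` and preserves these orders, so `W°` acts on `N`
and the inclusions give a homomorphism `N ⋊ W° → W`. Its inverse sends `s ∈ S⁺` to the generator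
`s` of `N` and `s ∈ S°` to `s ∈ W°`. The only Coxeter relation that needs thought is the one for
`s ∈ S°`, `s' ∈ S⁺`: multiplying by `s` does not change `L`, multiplying by `s'` changes it by
`± L(s')`, so `L((s s')^r)` is a multiple of `L(s')` with the parity of `r`, and `L(1) = 0` forces
`m(s, s')` to be even; then `(s s')^m = ((s s' s) s')^(m/2)` is a relation of `N`. The two maps
are inverse to each other on generators, so `W ≅ N ⋊ W°`, which gives all four assertions.
-/

namespace Stmt8

variable {B W Γ : Type*} [Group W] [AddCommGroup Γ] [LinearOrder Γ] [IsOrderedAddMonoid Γ]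
variable {M : CoxeterMatrix B} (cs : CoxeterSystem M W) (L : W → Γ)

/-- `W° = ⟨S°⟩`, the parabolic subgroup generated by the simple reflections of weight `0`. -/
def Wo : Subgroup W := Subgroup.closure (cs.simple '' {i | L (cs.simple i) = 0})

/-- `S̃ = { w s w⁻¹ : w ∈ W°, s ∈ S⁺ }`. -/
def Stilde : Set W :=
  {x | ∃ w ∈ Wo cs L, ∃ i : B, 0 < L (cs.simple i) ∧ x = w * cs.simple i * w⁻¹}

/-- `W̃ = ⟨S̃⟩`. -/
def Wtilde : Subgroup W := Subgroup.closure (Stilde cs L)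

end Stmt8

namespace CoxeterSystem

variable {B W Γ : Type*} [Group W] {M : CoxeterMatrix B} (cs : CoxeterSystem M W)

def IsWeightFunction [Add Γ] (L : W → Γ) : Prop :=
  ∀ u v : W, cs.length (u * v) = cs.length u + cs.length v → L (u * v) = L u + L v

namespace IsWeightFunction

variable {cs} {L : W → Γ}

theorem map_one [AddLeftCancelMonoid Γ] (hL : cs.IsWeightFunction L) : L 1 = 0 :=
  left_eq_add.mp (by simpa using hL 1 1 (by simp) : L 1 = L 1 + L 1)

theorem simple_mul [Add Γ] (hL : cs.IsWeightFunction L) (w : W) (i : B) :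
    L (cs.simple i * w) = L (cs.simple i) + L w ∨
      L w = L (cs.simple i) + L (cs.simple i * w) := by
  rcases cs.length_simple_mul w i with h | h
  · exact .inl (hL _ _ (by rw [cs.length_simple]; omega))
  · refine .inr ?_
    simpa only [cs.simple_mul_simple_cancel_left] using hL (cs.simple i) (cs.simple i * w)
      (by rw [cs.simple_mul_simple_cancel_left, cs.length_simple]; omega)

theorem exists_zsmul_simple_mul_simple_pow [AddCommGroup Γ] (hL : cs.IsWeightFunction L)
    {i : B} (hi : L (cs.simple i) = 0) (j : B) (r : ℕ) :
    ∃ a : ℤ, L ((cs.simple i * cs.simple j) ^ r) = a • L (cs.simple j) ∧ (Even a ↔ Even r) := by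
  induction r with
  | zero => exact ⟨0, by simp [hL.map_one], by simp⟩
  | succ r ih =>
    obtain ⟨a, ha, hpar⟩ := ih
    have hsi (x : W) : L (cs.simple i * x) = L x := by
      rcases hL.simple_mul x i with h | h <;> simp [h, hi]
    rw [pow_succ', mul_assoc, hsi]
    rcases hL.simple_mul ((cs.simple i * cs.simple j) ^ r) j with h | h
    · refine ⟨a + 1, by rw [h, ha, add_one_zsmul, add_comm], ?_⟩
      rw [Int.even_add_one, hpar, Nat.even_add_one]
    · refine ⟨a - 1, by rw [eq_sub_of_add_eq' h.symm, ha, sub_one_zsmul, sub_eq_add_neg], ?_⟩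
      rw [Int.even_sub_one, hpar, Nat.even_add_one]

theorem even_M_of_eq_zero_of_pos [AddCommGroup Γ] [LinearOrder Γ] [IsOrderedAddMonoid Γ]
    (hL : cs.IsWeightFunction L) {i j : B} (hi : L (cs.simple i) = 0)
    (hj : 0 < L (cs.simple j)) : Even (M i j) := by
  obtain ⟨a, ha, hpar⟩ := hL.exists_zsmul_simple_mul_simple_pow hi j (M i j)
  rw [cs.simple_mul_simple_pow, hL.map_one, eq_comm, smul_eq_zero] at ha
  exact hpar.mp (ha.resolve_right hj.ne' ▸ .zero)

end IsWeightFunction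

section

variable {H : Type*} [Group H] (ρ : H →* Equiv.Perm B) (hρ : ∀ h i j, M (ρ h i) (ρ h j) = M i j)

def permEnd (h : H) : W →* W :=
  cs.lift ⟨fun i => cs.simple (ρ h i), fun i j => by
    rw [← hρ h i j]
    exact cs.simple_mul_simple_pow _ _⟩

theorem permEnd_simple (h : H) (i : B) : cs.permEnd ρ hρ h (cs.simple i) = cs.simple (ρ h i) :=
  cs.lift_apply_simple _ i

theorem permEnd_one : cs.permEnd ρ hρ 1 = MonoidHom.id W :=
  cs.ext_simple fun i => by simp [permEnd_simple]

theorem permEnd_mul (h k : H) :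
    cs.permEnd ρ hρ (h * k) = (cs.permEnd ρ hρ h).comp (cs.permEnd ρ hρ k) :=
  cs.ext_simple fun i => by simp [permEnd_simple]

def mulAutOfPerm : H →* MulAut W where
  toFun h := (cs.permEnd ρ hρ h).toMulEquiv (cs.permEnd ρ hρ h⁻¹)
    (by rw [← permEnd_mul, inv_mul_cancel, permEnd_one])
    (by rw [← permEnd_mul, mul_inv_cancel, permEnd_one])
  map_one' := MulEquiv.ext fun w => DFunLike.congr_fun (cs.permEnd_one ρ hρ) w
  map_mul' h k := MulEquiv.ext fun w => DFunLike.congr_fun (cs.permEnd_mul ρ hρ h k) w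

theorem mulAutOfPerm_simple (h : H) (i : B) :
    cs.mulAutOfPerm ρ hρ h (cs.simple i) = cs.simple (ρ h i) :=
  cs.permEnd_simple ρ hρ h i

end

end CoxeterSystem

theorem SemidirectProduct.inr_mul_inl_sq {N K : Type*} [Group N] [Group K] {φ : K →* MulAut N}
    {k : K} (hk : k * k = 1) (n : N) :
    (inr k * inl n : N ⋊[φ] K) ^ 2 = inl (φ k n * n) := by
  have hφ : φ k (φ k n) = n := by rw [← MulAut.mul_apply, ← map_mul, hk, map_one, MulAut.one_apply]
  ext <;> simp [sq, hφ, hk]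

namespace CoxeterMatrix

variable {G : Type*} [Group G] {T : Set G}

noncomputable def ofInvolutions (hT : ∀ t ∈ T, t * t = 1) : CoxeterMatrix T where
  M := Matrix.of fun t t' => orderOf ((t : G) * t')
  isSymm := by
    ext t t'
    have h : (t : G) * (t * t') * (t : G)⁻¹ = t' * t := by
      rw [inv_eq_of_mul_eq_one_right (hT t t.2)]
      simp [← mul_assoc, hT t t.2]
    simpa [h] using (MulAut.conj (t : G)).orderOf_eq ((t : G) * t')
  diagonal t := by simp [hT t t.2]
  off_diagonal t t' hne h := by
    rw [Matrix.of_apply, orderOf_eq_one_iff] at h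
    exact hne (Subtype.ext ((inv_eq_of_mul_eq_one_right (hT t t.2)).symm.trans
      (inv_eq_of_mul_eq_one_right h)))

variable (hT : ∀ t ∈ T, t * t = 1)

theorem ofInvolutions_apply (t t' : T) : ofInvolutions hT t t' = orderOf ((t : G) * t') := rfl

theorem ofInvolutions_simple_mul_simple_pow_eq_one {t t' : T} {m : ℕ}
    (h : ((t : G) * t') ^ m = 1) :
    ((ofInvolutions hT).simple t * (ofInvolutions hT).simple t') ^ m = 1 := by
  obtain ⟨c, rfl⟩ := orderOf_dvd_of_pow_eq_one h
  rw [pow_mul, ← ofInvolutions_apply hT, ← toCoxeterSystem_simple,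
    CoxeterSystem.simple_mul_simple_pow, one_pow]

noncomputable def ofInvolutionsLift : (ofInvolutions hT).Group →* G :=
  (ofInvolutions hT).toCoxeterSystem.lift ⟨Subtype.val, fun _ _ => pow_orderOf_eq_one _⟩

theorem ofInvolutionsLift_simple (t : T) : ofInvolutionsLift hT ((ofInvolutions hT).simple t) = t :=
  (ofInvolutions hT).toCoxeterSystem.lift_apply_simple _ t

theorem range_ofInvolutionsLift : (ofInvolutionsLift hT).range = Subgroup.closure T := by
  rw [MonoidHom.range_eq_map, ← (ofInvolutions hT).toCoxeterSystem.subgroup_closure_range_simple,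
    MonoidHom.map_closure, ← Set.range_comp, toCoxeterSystem_simple]
  have h : ofInvolutionsLift hT ∘ (ofInvolutions hT).simple = Subtype.val :=
    funext (ofInvolutionsLift_simple hT)
  rw [h, Subtype.range_coe]

theorem exists_coxeterSystem_closure (hinj : Function.Injective (ofInvolutionsLift hT)) :
    ∃ cs : CoxeterSystem (ofInvolutions hT) (Subgroup.closure T), ∀ t : T, (cs.simple t : G) = t :=
  ⟨(ofInvolutions hT).toCoxeterSystem.map ((MonoidHom.ofInjective hinj).trans
    (MulEquiv.subgroupCongr (range_ofInvolutionsLift hT))), ofInvolutionsLift_simple hT⟩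

variable {H : Subgroup G} (hH : ∀ h ∈ H, ∀ t ∈ T, h * t * h⁻¹ ∈ T)

def conjPerm : H →* Equiv.Perm T where
  toFun h :=
    { toFun t := ⟨h * t * (h : G)⁻¹, hH h h.2 t t.2⟩
      invFun t := ⟨(h : G)⁻¹ * t * h, by simpa using hH h⁻¹ (inv_mem h.2) t t.2⟩
      left_inv t := Subtype.ext (by group)
      right_inv t := Subtype.ext (by group) }
  map_one' := by ext; simp
  map_mul' h k := by ext; simp [mul_assoc]

theorem coe_conjPerm_apply (h : H) (t : T) : (conjPerm hH h t : G) = h * t * (h : G)⁻¹ := rfl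

theorem ofInvolutions_conjPerm (h : H) (t t' : T) :
    ofInvolutions hT (conjPerm hH h t) (conjPerm hH h t') = ofInvolutions hT t t' := by
  simp only [ofInvolutions_apply, coe_conjPerm_apply]
  simpa [mul_assoc] using (MulAut.conj (h : G)).orderOf_eq ((t : G) * t')

noncomputable abbrev conjAction : H →* MulAut (ofInvolutions hT).Group :=
  (ofInvolutions hT).toCoxeterSystem.mulAutOfPerm (conjPerm hH) (ofInvolutions_conjPerm hT hH)

theorem conjAction_simple (h : H) (t : T) :
    conjAction hT hH h ((ofInvolutions hT).simple t) =
      (ofInvolutions hT).simple (conjPerm hH h t) :=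
  CoxeterSystem.mulAutOfPerm_simple _ _ _ h t

noncomputable def semidirectLift : (ofInvolutions hT).Group ⋊[conjAction hT hH] H →* G :=
  SemidirectProduct.lift (ofInvolutionsLift hT) H.subtype fun h =>
    (ofInvolutions hT).toCoxeterSystem.ext_simple fun t => by
      simp [conjAction_simple, ofInvolutionsLift_simple, coe_conjPerm_apply]

theorem inr_mul_inl_simple_pow_two_mul_eq_one {a : H} (ha : (a : G) * a = 1) {t : T} {k : ℕ}
    (h : ((a : G) * t) ^ (2 * k) = 1) :
    (.inr a * .inl ((ofInvolutions hT).simple t) :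
      (ofInvolutions hT).Group ⋊[conjAction hT hH] H) ^ (2 * k) = 1 := by
  have hG : ((conjPerm hH a t : G) * t) ^ k = 1 := by
    rw [coe_conjPerm_apply, inv_eq_of_mul_eq_one_right ha, ← h, pow_mul, sq]
    simp only [mul_assoc]
  rw [pow_mul, SemidirectProduct.inr_mul_inl_sq (Subtype.ext ha), conjAction_simple, ← map_pow,
    ofInvolutions_simple_mul_simple_pow_eq_one hT hG, map_one]

theorem semidirectLift_inl (n : (ofInvolutions hT).Group) :
    semidirectLift hT hH (.inl n) = ofInvolutionsLift hT n :=
  SemidirectProduct.lift_inl _ _ _ n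

theorem semidirectLift_comp_inl :
    (semidirectLift hT hH).comp SemidirectProduct.inl = ofInvolutionsLift hT :=
  SemidirectProduct.lift_comp_inl _ _ _

theorem semidirectLift_inr (h : H) : semidirectLift hT hH (.inr h) = h :=
  SemidirectProduct.lift_inr _ _ _ h

theorem normal_closure_of_surjective_semidirectLift
    (hsurj : Function.Surjective (semidirectLift hT hH)) :
    (Subgroup.closure T).Normal := by
  rw [← range_ofInvolutionsLift hT, ← semidirectLift_comp_inl hT hH, MonoidHom.range_comp,
    SemidirectProduct.range_inl_eq_ker_rightHom]
  exact (MonoidHom.normal_ker _).map _ hsurj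

theorem sup_closure_eq_top_of_surjective_semidirectLift
    (hsurj : Function.Surjective (semidirectLift hT hH)) :
    H ⊔ Subgroup.closure T = ⊤ := by
  refine eq_top_iff.mpr fun g _ => ?_
  obtain ⟨p, rfl⟩ := hsurj g
  rw [← SemidirectProduct.inl_left_mul_inr_right p, map_mul, sup_comm, semidirectLift_inl,
    semidirectLift_inr]
  exact Subgroup.mul_mem_sup (range_ofInvolutionsLift hT ▸ ⟨_, rfl⟩) p.right.2

theorem inf_closure_eq_bot_of_injective_semidirectLift
    (hinj : Function.Injective (semidirectLift hT hH)) :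
    H ⊓ Subgroup.closure T = ⊥ := by
  refine eq_bot_iff.mpr fun g ⟨hgH, hgT⟩ => ?_
  rw [← range_ofInvolutionsLift hT] at hgT
  obtain ⟨n, rfl⟩ := hgT
  have h : SemidirectProduct.inl n = SemidirectProduct.inr (⟨_, hgH⟩ : H) :=
    hinj (by rw [semidirectLift_inl, semidirectLift_inr])
  have h1 := congrArg SemidirectProduct.right h
  rw [SemidirectProduct.right_inl, SemidirectProduct.right_inr] at h1
  exact Subgroup.mem_bot.mpr (congrArg Subtype.val h1).symm

theorem injective_ofInvolutionsLift_of_injective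
    (hinj : Function.Injective (semidirectLift hT hH)) :
    Function.Injective (ofInvolutionsLift hT) := by
  intro n n' h
  exact SemidirectProduct.inl_injective (hinj (by rw [semidirectLift_inl, semidirectLift_inl, h]))

end CoxeterMatrix

namespace Stmt8

open CoxeterMatrix

section

variable {B W Γ : Type*} [Group W] [AddCommGroup Γ] {M : CoxeterMatrix B}
  (cs : CoxeterSystem M W) (L : W → Γ)

theorem simple_mem_Wo {i : B} (h : L (cs.simple i) = 0) : cs.simple i ∈ Wo cs L :=
  Subgroup.subset_closure ⟨i, h, rfl⟩

variable [LinearOrder Γ]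

theorem mul_self_of_mem_stilde : ∀ t ∈ Stilde cs L, t * t = 1 := by
  rintro _ ⟨w, -, i, -, rfl⟩
  simp [mul_assoc, cs.simple_mul_simple_cancel_left]

theorem conj_mem_stilde : ∀ w ∈ Wo cs L, ∀ t ∈ Stilde cs L, w * t * w⁻¹ ∈ Stilde cs L := by
  rintro w hw _ ⟨v, hv, i, hi, rfl⟩
  exact ⟨w * v, mul_mem hw hv, i, hi, by group⟩

theorem simple_mem_stilde {i : B} (h : 0 < L (cs.simple i)) : cs.simple i ∈ Stilde cs L :=
  ⟨1, one_mem _, i, h, by group⟩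

noncomputable abbrev stildeMatrix : CoxeterMatrix (Stilde cs L) :=
  ofInvolutions (mul_self_of_mem_stilde cs L)

noncomputable abbrev Semidirect : Type _ :=
  (stildeMatrix cs L).Group ⋊[conjAction _ (conj_mem_stilde cs L)] Wo cs L

noncomputable abbrev fromSemidirect : Semidirect cs L →* W :=
  semidirectLift _ (conj_mem_stilde cs L)

variable [IsOrderedAddMonoid Γ] (hnonneg : ∀ i : B, 0 ≤ L (cs.simple i))

noncomputable def toSemidirectGen (i : B) : Semidirect cs L :=
  if h : 0 < L (cs.simple i) then
    .inl ((stildeMatrix cs L).simple ⟨_, simple_mem_stilde cs L h⟩)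
  else
    .inr ⟨_, simple_mem_Wo cs L ((not_lt.mp h).antisymm (hnonneg i))⟩

theorem isLiftable_toSemidirectGen (hweight : cs.IsWeightFunction L) :
    M.IsLiftable (toSemidirectGen cs L hnonneg) := by
  intro i j
  wlog hij : ¬ (0 < L (cs.simple i) ∧ ¬ 0 < L (cs.simple j)) generalizing i j
  · have hconj : SemiconjBy (toSemidirectGen cs L hnonneg j)
        (toSemidirectGen cs L hnonneg i * toSemidirectGen cs L hnonneg j)
        (toSemidirectGen cs L hnonneg j * toSemidirectGen cs L hnonneg i) := by
      simp [SemiconjBy, mul_assoc]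
    rw [hconj.pow_right _ |>.eq_one_iff, M.symmetric]
    exact this j i (by tauto)
  simp only [toSemidirectGen]
  by_cases hi : 0 < L (cs.simple i) <;> by_cases hj : 0 < L (cs.simple j)
  · rw [dif_pos hi, dif_pos hj, ← map_mul, ← map_pow,
      ofInvolutions_simple_mul_simple_pow_eq_one _ (cs.simple_mul_simple_pow i j), map_one]
  · exact absurd ⟨hi, hj⟩ hij
  · have hLi : L (cs.simple i) = 0 := (not_lt.mp hi).antisymm (hnonneg i)
    obtain ⟨k, hk⟩ := (hweight.even_M_of_eq_zero_of_pos hLi hj).two_dvd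
    rw [dif_neg hi, dif_pos hj, hk]
    exact inr_mul_inl_simple_pow_two_mul_eq_one _ _ (cs.simple_mul_simple_self i)
      (hk ▸ cs.simple_mul_simple_pow i j)
  · rw [dif_neg hi, dif_neg hj, ← map_mul, ← map_pow,
      map_eq_one_iff _ SemidirectProduct.inr_injective]
    exact Subtype.ext (cs.simple_mul_simple_pow i j)

noncomputable def toSemidirect (hweight : cs.IsWeightFunction L) : W →* Semidirect cs L :=
  cs.lift ⟨_, isLiftable_toSemidirectGen cs L hnonneg hweight⟩

variable (hweight : cs.IsWeightFunction L)

theorem toSemidirect_simple_of_pos {i : B} (h : 0 < L (cs.simple i)) :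
    toSemidirect cs L hnonneg hweight (cs.simple i) =
      .inl ((stildeMatrix cs L).simple ⟨_, simple_mem_stilde cs L h⟩) := by
  rw [toSemidirect, cs.lift_apply_simple, toSemidirectGen, dif_pos h]

theorem toSemidirect_simple_of_eq_zero {i : B} (h : L (cs.simple i) = 0) :
    toSemidirect cs L hnonneg hweight (cs.simple i) = .inr ⟨_, simple_mem_Wo cs L h⟩ := by
  rw [toSemidirect, cs.lift_apply_simple, toSemidirectGen, dif_neg h.not_gt]

theorem toSemidirect_of_mem_Wo {w : W} (hw : w ∈ Wo cs L) :
    toSemidirect cs L hnonneg hweight w = .inr ⟨w, hw⟩ := by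
  induction hw using Subgroup.closure_induction with
  | mem _ h =>
    obtain ⟨i, hi, rfl⟩ := h
    exact toSemidirect_simple_of_eq_zero cs L hnonneg hweight hi
  | one => rw [map_one]; rfl
  | mul _ _ _ _ hv hw => rw [map_mul, hv, hw, ← map_mul]; rfl
  | inv _ _ hw => rw [map_inv, hw, ← map_inv]; rfl

theorem fromSemidirect_comp_toSemidirect :
    (fromSemidirect cs L).comp (toSemidirect cs L hnonneg hweight) = MonoidHom.id W := by
  refine cs.ext_simple fun i => ?_
  rcases (hnonneg i).lt_or_eq with h | h
  · simp [toSemidirect_simple_of_pos cs L hnonneg hweight h, semidirectLift_inl,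
      ofInvolutionsLift_simple]
  · simp [toSemidirect_simple_of_eq_zero cs L hnonneg hweight h.symm, semidirectLift_inr]

theorem toSemidirect_comp_fromSemidirect :
    (toSemidirect cs L hnonneg hweight).comp (fromSemidirect cs L) = MonoidHom.id _ := by
  refine SemidirectProduct.hom_ext ((stildeMatrix cs L).toCoxeterSystem.ext_simple fun t => ?_)
    (MonoidHom.ext fun w => ?_)
  · obtain ⟨_, ⟨w, hw, i, hi, rfl⟩⟩ := t
    simp only [MonoidHom.comp_apply, MonoidHom.id_apply, toCoxeterSystem_simple,
      semidirectLift_inl, ofInvolutionsLift_simple, map_mul, map_inv,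
      toSemidirect_of_mem_Wo cs L hnonneg hweight hw,
      toSemidirect_simple_of_pos cs L hnonneg hweight hi]
    rw [← map_inv, ← SemidirectProduct.inl_aut, conjAction_simple]
    rfl
  · simp [semidirectLift_inr, toSemidirect_of_mem_Wo cs L hnonneg hweight w.2]

end

variable {B W Γ : Type*} [Group W] [AddCommGroup Γ] [LinearOrder Γ] [IsOrderedAddMonoid Γ]
variable {M : CoxeterMatrix B} (cs : CoxeterSystem M W) (L : W → Γ)

theorem bijective_fromSemidirect (hnonneg : ∀ i : B, 0 ≤ L (cs.simple i))
    (hweight : cs.IsWeightFunction L) : Function.Bijective (fromSemidirect cs L) :=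
  Function.bijective_iff_has_inverse.mpr ⟨toSemidirect cs L hnonneg hweight,
    DFunLike.congr_fun (toSemidirect_comp_fromSemidirect cs L hnonneg hweight),
    DFunLike.congr_fun (fromSemidirect_comp_toSemidirect cs L hnonneg hweight)⟩

/-- For a non-negative weight function `L` on a Coxeter system `(W,S)`,
`W` is the semidirect product `W° ⋉ W̃` (`W̃` is normal, `W° ∩ W̃ = 1`, `W = W° W̃`),
and `(W̃, S̃)` is a Coxeter system. -/
theorem stmt8
    (hweight : ∀ u v : W, cs.length (u * v) = cs.length u + cs.length v →
      L (u * v) = L u + L v)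
    (hnonneg : ∀ i : B, 0 ≤ L (cs.simple i)) :
    (Wtilde cs L).Normal ∧
    Wo cs L ⊓ Wtilde cs L = ⊥ ∧
    Wo cs L ⊔ Wtilde cs L = ⊤ ∧
    ∃ (M' : CoxeterMatrix (Stilde cs L)) (cs' : CoxeterSystem M' (Wtilde cs L)),
      ∀ t : Stilde cs L, ((cs'.simple t : Wtilde cs L) : W) = (t : W) := by
  obtain ⟨hinj, hsurj⟩ := bijective_fromSemidirect cs L hnonneg hweight
  exact ⟨normal_closure_of_surjective_semidirectLift _ _ hsurj,
    inf_closure_eq_bot_of_injective_semidirectLift _ _ hinj,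
    sup_closure_eq_top_of_surjective_semidirectLift _ _ hsurj,
    _, exists_coxeterSystem_closure _ (injective_ofInvolutionsLift_of_injective _ _ hinj)⟩

end Stmt8
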